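/- Let a = (f_1,...,f_k), b = (g_1,...,g_l) ∈ K(X,G) with A_i = supp(f_i), B_j = supp(g_j). If there exists m ∈ ℕ⁺ such that [a] ≤ m[b] in W(X,G) and D([a]) < D([b]) for every state D on W(X,G) with D([b]) = 1, then ⋃_i A_i ⊆ G·(⋃_j B_j) and Σ_i μ(A_i) < Σ_j μ(B_j) for every μ ∈ Pr_G(X) with Σ_j μ(B_j) = 1. -/

import Mathlib

open scoped Pointwise NNReal ENNReal

variable {X : Type*} [TopologicalSpace X] {G : Type*} [Group G] [MulAction G X]

/-- The open support of a continuous `ℝ≥0`-valued function. -/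
def osupp (f : C(X, ℝ≥0)) : Set X := {x | f x ≠ 0}

/-- Dynamical subequivalence `A ≼ B` for two finite tuples (lists) of subsets of `X`. -/
def SetSubeq (G : Type*) [Group G] [MulAction G X] (A B : List (Set X)) : Prop :=
  ∀ F : Fin A.length → Set X,
    (∀ i, IsClosed (F i) ∧ F i ⊆ A.get i) →
    ∃ (J : Fin A.length → ℕ)
      (U : (i : Fin A.length) → Fin (J i) → Set X)
      (s : (i : Fin A.length) → Fin (J i) → G)
      (k : (i : Fin A.length) → Fin (J i) → Fin B.length),
      (∀ i j, IsOpen (U i j)) ∧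
      (∀ i, F i ⊆ ⋃ j, U i j) ∧
      (∀ i j, (s i j) • U i j ⊆ B.get (k i j)) ∧
      (∀ (p q : Σ i : Fin A.length, Fin (J i)), p ≠ q → k p.1 p.2 = k q.1 q.2 →
        Disjoint ((s p.1 p.2) • U p.1 p.2) ((s q.1 q.2) • U q.1 q.2))

/-- Dynamical subequivalence `a ≼ b` for tuples of nonnegative continuous functions. -/
def DynSubeq (G : Type*) [Group G] [MulAction G X] (a b : List C(X, ℝ≥0)) : Prop :=
  SetSubeq G (a.map osupp) (b.map osupp)

/-- The entrywise cut-down `(f - ε)₊`. -/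
noncomputable def cutFun (f : C(X, ℝ≥0)) (ε : ℝ≥0) : C(X, ℝ≥0) :=
  ⟨fun x => f x - ε, f.continuous.sub continuous_const⟩

noncomputable def cutList (a : List C(X, ℝ≥0)) (ε : ℝ≥0) : List C(X, ℝ≥0) := a.map (cutFun · ε)

/-- Membership in the algebra of sets generated by the open sets of `X`. -/
def InAlg (X : Type*) [TopologicalSpace X] (s : Set X) : Prop :=
  s ∈ MeasureTheory.generateSetAlgebra {t : Set X | IsOpen t}

/-- A `G`-invariant regular premeasure on the algebra generated by the open sets. -/
structure InvRegPremeasure (X : Type*) [TopologicalSpace X] (G : Type*) [Group G]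
    [MulAction G X] where
  m : Set X → ℝ≥0∞
  junk : ∀ s : Set X, ¬ InAlg X s → m s = 0
  empty' : m ∅ = 0
  countably_additive : ∀ A : ℕ → Set X, (∀ n, InAlg X (A n)) →
    Pairwise (Function.onFun Disjoint A) → InAlg X (⋃ n, A n) →
    m (⋃ n, A n) = ∑' n, m (A n)
  invariant : ∀ (g : G) (s : Set X), InAlg X s → m (g • s) = m s
  inner_regular : ∀ s : Set X, InAlg X s →
    m s = ⨆ (F : Set X) (_ : IsCompact F ∧ F ⊆ s), m F
  outer_regular : ∀ s : Set X, InAlg X s →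
    m s = ⨅ (O : Set X) (_ : IsOpen O ∧ s ⊆ O), m O

/-- A state on the generalized type semigroup `W(X, G)`, described at the level of
`K(X, G)`: a function on tuples which is monotone for `≼`, additive for concatenation,
and vanishes on the empty tuple. -/
structure DynState (X : Type*) [TopologicalSpace X] (G : Type*) [Group G]
    [MulAction G X] where
  toFun : List C(X, ℝ≥0) → ℝ≥0∞
  mono : ∀ a b, DynSubeq G a b → toFun a ≤ toFun b
  additive : ∀ a b, toFun (a ++ b) = toFun a + toFun b
  zero' : toFun [] = 0

/-- Lower semicontinuity of a state. -/
def DynState.LSC (D : DynState X G) : Prop :=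
  ∀ a, D.toFun a = ⨆ (ε : ℝ≥0) (_ : 0 < ε), D.toFun (cutList a ε)

/-!
Testing `a ≼ m·b` on a singleton `{x} ⊆ Aᵢ` produces an open set around `x` that some group
element carries into one of the `Bⱼ`; this gives the support inclusion.

For the measure inequality, every `μ ∈ Pr_G(X)` defines a state `D_μ(c) = Σᵢ μ(supp cᵢ)`, so the
hypothesis on states applies to it directly. The only work is the monotonicity of `D_μ` for `≼`:
for compact `Fᵢ ⊆ Aᵢ`, the open covers `Uᵢⱼ ⊇ Fᵢ` given by `≼` are moved, without changing their
measure, to pairwise disjoint subsets of each `Bₖ`, whence `Σ μ(Fᵢ) ≤ Σ μ(Bₖ)`; inner regularity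
then passes from the `Fᵢ` to the `Aᵢ`.
-/

open MeasureTheory Set

lemma isOpen_osupp (f : C(X, ℝ≥0)) : IsOpen (osupp f) :=
  isOpen_ne_fun f.continuous continuous_const

lemma isSetAlgebra_inAlg : IsSetAlgebra {s : Set X | InAlg X s} :=
  isSetAlgebra_generateSetAlgebra

lemma InAlg.of_isOpen {s : Set X} (hs : IsOpen s) : InAlg X s :=
  generateSetAlgebra.base s hs

lemma InAlg.of_isClosed {s : Set X} (hs : IsClosed s) : InAlg X s := by
  simpa using isSetAlgebra_inAlg.compl_mem (InAlg.of_isOpen hs.isOpen_compl)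

lemma MeasureTheory.sum_addContent_le_of_fiberwise_disjoint {α ι κ M : Type*} [Fintype ι]
    [Fintype κ] [AddCommMonoid M] [PartialOrder M] [CanonicallyOrderedAdd M]
    [IsOrderedAddMonoid M] {C : Set (Set α)} {m : AddContent M C} (hC : IsSetRing C)
    {V : ι → Set α} {B : κ → Set α} (k : ι → κ) (hV : ∀ i, V i ∈ C) (hB : ∀ j, B j ∈ C)
    (hVB : ∀ i, V i ⊆ B (k i))
    (hdisj : ∀ i i', i ≠ i' → k i = k i' → Disjoint (V i) (V i')) :
    ∑ i, m (V i) ≤ ∑ j, m (B j) := by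
  classical
  rw [← Finset.sum_fiberwise Finset.univ k]
  gcongr with j
  rw [← addContent_biUnion_eq hC (fun i _ => hV i)]
  · refine addContent_mono hC.isSetSemiring (hC.biUnion_mem _ fun i _ => hV i) (hB j) ?_
    exact iUnion₂_subset fun i hi => (Finset.mem_filter.mp hi).2 ▸ hVB i
  · intro i hi i' hi' hii'
    exact hdisj i i' hii' ((Finset.mem_filter.mp hi).2.trans (Finset.mem_filter.mp hi').2.symm)

namespace InvRegPremeasure

variable (μ : InvRegPremeasure X G)

theorem m_union {s t : Set X} (hs : InAlg X s) (ht : InAlg X t) (hst : Disjoint s t) :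
    μ.m (s ∪ t) = μ.m s + μ.m t := by
  classical
  let A : ℕ → Set X := fun n => if n = 0 then s else if n = 1 then t else ∅
  have hA : ⋃ n, A n = s ∪ t := by
    ext x
    simp only [A, mem_iUnion, mem_union]
    constructor
    · rintro ⟨n, hn⟩
      split_ifs at hn <;> simp_all
    · rintro (hx | hx)
      exacts [⟨0, by simpa⟩, ⟨1, by simpa⟩]
  have hAalg : ∀ n, InAlg X (A n) := fun n => by
    simp only [A]; split_ifs
    exacts [hs, ht, isSetAlgebra_inAlg.empty_mem]
  have hAdisj : Pairwise (Function.onFun Disjoint A) := by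
    rintro (_ | _ | n) (_ | _ | n') h <;> simp_all [A, Function.onFun, hst.symm]
  have := μ.countably_additive A hAalg hAdisj (hA ▸ isSetAlgebra_inAlg.union_mem hs ht)
  rw [hA] at this
  rw [this, tsum_eq_sum (s := Finset.range 2)]
  · simp [A, Finset.sum_range_succ]
  · intro n hn
    simp only [Finset.mem_range, not_lt] at hn
    simp [A, show n ≠ 0 by omega, show n ≠ 1 by omega, μ.empty']

noncomputable def toAddContent : AddContent ℝ≥0∞ {s : Set X | InAlg X s} :=
  isSetAlgebra_inAlg.isSetRing.addContent_of_union μ.m μ.empty' μ.m_union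

@[simp]
lemma toAddContent_apply (s : Set X) : μ.toAddContent s = μ.m s := rfl

theorem m_mono {s t : Set X} (hs : InAlg X s) (ht : InAlg X t) (hst : s ⊆ t) :
    μ.m s ≤ μ.m t :=
  addContent_mono (m := μ.toAddContent) isSetAlgebra_inAlg.isSetRing.isSetSemiring hs ht hst

theorem m_iUnion_le {ι : Type*} [Fintype ι] {s : ι → Set X} (hs : ∀ i, InAlg X (s i)) :
    μ.m (⋃ i, s i) ≤ ∑ i, μ.m (s i) := by
  simpa using addContent_biUnion_le (m := μ.toAddContent) isSetAlgebra_inAlg.isSetRing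
    (S := Finset.univ) fun i _ => hs i

lemma sum_m_osupp_eq (c : List C(X, ℝ≥0)) :
    ∑ i : Fin c.length, μ.m (osupp (c.get i)) = (c.map fun f => μ.m (osupp f)).sum :=
  Fin.sum_univ_fun_getElem c fun f => μ.m (osupp f)

theorem m_eq_iSup_isCompact {s : Set X} (hs : InAlg X s) :
    μ.m s = ⨆ K : {K : Set X // IsCompact K ∧ K ⊆ s}, μ.m K := by
  rw [μ.inner_regular s hs, iSup_subtype']

variable [T2Space X]

theorem sum_eq_iSup_sum_isCompact {ι : Type*} [Fintype ι] {A : ι → Set X}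
    (hA : ∀ i, InAlg X (A i)) :
    ∑ i, μ.m (A i) = ⨆ F : (∀ i, {K : Set X // IsCompact K ∧ K ⊆ A i}), ∑ i, μ.m (F i) := by
  have (i : ι) : Nonempty {K : Set X // IsCompact K ∧ K ⊆ A i} :=
    ⟨⟨∅, isCompact_empty, empty_subset _⟩⟩
  have h_eval (i : ι) :
      μ.m (A i) = ⨆ F : (∀ i, {K : Set X // IsCompact K ∧ K ⊆ A i}), μ.m (F i) := by
    rw [μ.m_eq_iSup_isCompact (hA i)]
    exact ((Function.surjective_eval
      (β := fun i => {K : Set X // IsCompact K ∧ K ⊆ A i}) i).iSup_comp _).symm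
  simp_rw [h_eval]
  refine ENNReal.finsetSum_iSup fun F F' => ⟨fun i => ⟨F i ∪ F' i,
    (F i).2.1.union (F' i).2.1, union_subset (F i).2.2 (F' i).2.2⟩, fun i => ?_⟩
  have hunion := InAlg.of_isClosed ((F i).2.1.union (F' i).2.1).isClosed
  exact ⟨μ.m_mono (.of_isClosed (F i).2.1.isClosed) hunion subset_union_left,
    μ.m_mono (.of_isClosed (F' i).2.1.isClosed) hunion subset_union_right⟩

variable [ContinuousConstSMul G X]

theorem sum_le_of_setSubeq_of_isCompact {A B : List (Set X)}
    (hB : ∀ j, InAlg X (B.get j)) (h : SetSubeq G A B) {F : Fin A.length → Set X}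
    (hF : ∀ i, IsCompact (F i) ∧ F i ⊆ A.get i) :
    ∑ i, μ.m (F i) ≤ ∑ j, μ.m (B.get j) := by
  obtain ⟨J, U, s, k, hU, hFU, hsUB, hdisj⟩ := h F fun i => ⟨(hF i).1.isClosed, (hF i).2⟩
  have hUalg : ∀ i j, InAlg X (U i j) := fun i j => .of_isOpen (hU i j)
  calc ∑ i, μ.m (F i)
      ≤ ∑ i, ∑ j, μ.m (U i j) := by
        gcongr with i
        exact (μ.m_mono (.of_isClosed (hF i).1.isClosed)
          (.of_isOpen (isOpen_iUnion (hU i))) (hFU i)).trans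
          (μ.m_iUnion_le (hUalg i))
    _ = ∑ p : (Σ i, Fin (J i)), μ.m (s p.1 p.2 • U p.1 p.2) := by
        rw [← Finset.univ_sigma_univ, Finset.sum_sigma]
        simp only [μ.invariant _ _ (hUalg _ _)]
    _ ≤ ∑ j, μ.m (B.get j) :=
        sum_addContent_le_of_fiberwise_disjoint (m := μ.toAddContent)
          isSetAlgebra_inAlg.isSetRing (fun p => k p.1 p.2)
          (fun p => .of_isOpen ((hU p.1 p.2).smul _)) hB (fun p => hsUB p.1 p.2) hdisj

theorem sum_le_of_setSubeq {A B : List (Set X)} (hA : ∀ i, InAlg X (A.get i))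
    (hB : ∀ j, InAlg X (B.get j)) (h : SetSubeq G A B) :
    ∑ i, μ.m (A.get i) ≤ ∑ j, μ.m (B.get j) := by
  rw [μ.sum_eq_iSup_sum_isCompact hA]
  exact iSup_le fun F => μ.sum_le_of_setSubeq_of_isCompact hB h fun i => (F i).2

noncomputable def toDynState : DynState X G where
  toFun c := ∑ i : Fin c.length, μ.m (osupp (c.get i))
  mono a b h := by
    have := μ.sum_le_of_setSubeq (A := a.map osupp) (B := b.map osupp)
      (by simpa using fun i => InAlg.of_isOpen (isOpen_osupp _))
      (by simpa using fun j => InAlg.of_isOpen (isOpen_osupp _)) h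
    simp only [List.get_eq_getElem, Fin.sum_univ_fun_getElem, List.map_map] at this
    rwa [sum_m_osupp_eq, sum_m_osupp_eq]
  additive a b := by simp only [sum_m_osupp_eq, List.map_append, List.sum_append]
  zero' := by simp

end InvRegPremeasure

theorem SetSubeq.exists_smul_mem [T1Space X] {A B : List (Set X)} (h : SetSubeq G A B) {S : Set X}
    (hS : S ∈ A) {x : X} (hx : x ∈ S) : ∃ g : G, ∃ T ∈ B, g • x ∈ T := by
  classical
  obtain ⟨i, rfl⟩ := List.mem_iff_get.mp hS
  obtain ⟨J, U, s, k, -, hFU, hsUB, -⟩ := h (fun i' => if i' = i then {x} else ∅) fun i' => by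
    split_ifs with hi
    · exact ⟨isClosed_singleton, hi ▸ singleton_subset_iff.mpr hx⟩
    · exact ⟨isClosed_empty, empty_subset _⟩
  obtain ⟨j, hj⟩ := mem_iUnion.mp (hFU i (show x ∈ _ by simp))
  exact ⟨s i j, _, List.get_mem _ _, hsUB i j (smul_mem_smul_set hj)⟩

theorem state_comparison_implies_premeasure_comparison_general {X : Type*} [TopologicalSpace X]
    [T2Space X]
    {G : Type*} [Group G] [MulAction G X]
    (hG : ∀ g : G, Continuous fun x : X => g • x)
    (a b : List C(X, ℝ≥0))
    (h₁ : ∃ m : ℕ, 0 < m ∧ DynSubeq G a (List.flatten (List.replicate m b)))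
    (h₂ : ∀ D : DynState X G, D.toFun b = 1 → D.toFun a < D.toFun b) :
    ((⋃ i : Fin a.length, osupp (a.get i)) ⊆
      ⋃ g : G, g • ⋃ j : Fin b.length, osupp (b.get j)) ∧
    (∀ μ : InvRegPremeasure X G, (∑ j : Fin b.length, μ.m (osupp (b.get j))) = 1 →
      (∑ i : Fin a.length, μ.m (osupp (a.get i))) <
        ∑ j : Fin b.length, μ.m (osupp (b.get j))) := by
  have : ContinuousConstSMul G X := ⟨hG⟩
  obtain ⟨m, -, hab⟩ := h₁
  refine ⟨fun x hx => ?_, fun μ hμ => h₂ μ.toDynState hμ⟩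
  obtain ⟨i, hxi⟩ := mem_iUnion.mp hx
  obtain ⟨g, T, hT, hgx⟩ := hab.exists_smul_mem (List.mem_map_of_mem (List.get_mem a i)) hxi
  obtain ⟨f, hf, rfl⟩ := List.mem_map.mp hT
  obtain ⟨l, hl, hfl⟩ := List.mem_flatten.mp hf
  obtain ⟨j, rfl⟩ := List.mem_iff_get.mp (List.eq_of_mem_replicate hl ▸ hfl)
  refine mem_iUnion.mpr ⟨g⁻¹, mem_smul_set_iff_inv_smul_mem.mpr ?_⟩
  rw [inv_inv]
  exact mem_iUnion.mpr ⟨j, hgx⟩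

/-- **Lemma 3.8, (ii) ⇒ (iii).** If `[a] ≤ m[b]` in `W(X, G)` for some `m ∈ ℕ⁺` and
`D([a]) < D([b])` for every state `D` with `D([b]) = 1`, then
`⋃ᵢ Aᵢ ⊆ G ⋅ (⋃ⱼ Bⱼ)` and `Σᵢ μ(Aᵢ) < Σⱼ μ(Bⱼ)` for every `μ ∈ Pr_G(X)` with
`Σⱼ μ(Bⱼ) = 1`. -/
theorem state_comparison_implies_premeasure_comparison {X : Type*} [TopologicalSpace X]
    [CompactSpace X] [T2Space X] [TopologicalSpace.MetrizableSpace X]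
    {G : Type*} [Group G] [MulAction G X]
    (hG : ∀ g : G, Continuous fun x : X => g • x)
    (a b : List C(X, ℝ≥0))
    (h₁ : ∃ m : ℕ, 0 < m ∧ DynSubeq G a (List.flatten (List.replicate m b)))
    (h₂ : ∀ D : DynState X G, D.toFun b = 1 → D.toFun a < D.toFun b) :
    ((⋃ i : Fin a.length, osupp (a.get i)) ⊆
      ⋃ g : G, g • ⋃ j : Fin b.length, osupp (b.get j)) ∧
    (∀ μ : InvRegPremeasure X G, (∑ j : Fin b.length, μ.m (osupp (b.get j))) = 1 →
      (∑ i : Fin a.length, μ.m (osupp (a.get i))) <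
        ∑ j : Fin b.length, μ.m (osupp (b.get j))) :=
  state_comparison_implies_premeasure_comparison_general hG a b h₁ h₂
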